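/- arXiv:2403.04902 — 10 statements merged into one kernel-verified Lean document; each statement's English description precedes it below -/
import Mathlib

section
/- Let G be a positively pseudo-invertible graph with adjacency matrix A and signature matrix D such that DA†D ≥ 0. Then the Moore-Penrose inverse of DA†D is signable by the same signature matrix D, and D(DA†D)†D = A. Consequently, the pseudo-inverse of the pseudo-inverse graph is the original graph: (G†)† = G. -/
open Matrix

/-- The four Moore-Penrose (Penrose) axioms for a real matrix `K` and candidate inverse `K'`. -/
def IsMoorePenrose {α β : Type*} [Fintype α] [Fintype β]
    (K : Matrix α β ℝ) (K' : Matrix β α ℝ) : Prop :=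
  (K * K')ᵀ = K * K' ∧ (K' * K)ᵀ = K' * K ∧ K * K' * K = K ∧ K' * K * K' = K'

/-- Diagonal entries of a ±1 signature matrix. -/
def IsSign {α : Type*} (d : α → ℝ) : Prop := ∀ i, d i = 1 ∨ d i = -1

/-!
The Penrose equations are symmetric in `K` and `K'`, and they survive the conjugation
`K ↦ P K Q`, `K' ↦ Qᵀ K' Pᵀ` by orthogonal `P`, `Q`. A signature matrix `D` is a symmetric
involution, so the pair `(A', A)` yields the pair `(D A' D, D A D)`; uniqueness of the
Moore-Penrose inverse identifies `(D A' D)†` with `D A D`, and `D (D A D) D = A`.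
-/

namespace IsMoorePenrose

variable {α β : Type*} [Fintype α] [Fintype β]

theorem symm {K : Matrix α β ℝ} {K' : Matrix β α ℝ} (h : IsMoorePenrose K K') :
    IsMoorePenrose K' K :=
  let ⟨h₁, h₂, h₃, h₄⟩ := h
  ⟨h₂, h₁, h₄, h₃⟩

theorem unique {K : Matrix α β ℝ} {X Y : Matrix β α ℝ}
    (hX : IsMoorePenrose K X) (hY : IsMoorePenrose K Y) : X = Y := by
  obtain ⟨hX₁, hX₂, hX₃, hX₄⟩ := hX
  obtain ⟨hY₁, hY₂, hY₃, hY₄⟩ := hY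
  have hKX : K * X = K * Y := by
    calc K * X = (K * Y)ᵀ * (K * X)ᵀ := by rw [hY₁, hX₁, ← Matrix.mul_assoc, hY₃]
    _ = Yᵀ * (K * X * K)ᵀ := by simp only [transpose_mul, Matrix.mul_assoc]
    _ = K * Y := by rw [hX₃, ← transpose_mul, hY₁]
  have hXK : X * K = Y * K := by
    calc X * K = (X * K)ᵀ * (Y * K)ᵀ := by
          rw [hX₂, hY₂, ← Matrix.mul_assoc, Matrix.mul_assoc X K Y, Matrix.mul_assoc X, hY₃]
    _ = (K * X * K)ᵀ * Yᵀ := by simp only [transpose_mul, Matrix.mul_assoc]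
    _ = Y * K := by rw [hX₃, ← transpose_mul, hY₂]
  calc X = X * K * X := hX₄.symm
  _ = Y * K * Y := by rw [Matrix.mul_assoc, hKX, ← Matrix.mul_assoc, hXK]
  _ = Y := hY₄

variable {γ δ : Type*} [Fintype γ] [Fintype δ] [DecidableEq α] [DecidableEq β]

theorem conj {K : Matrix α β ℝ} {K' : Matrix β α ℝ} (h : IsMoorePenrose K K')
    {P : Matrix γ α ℝ} {Q : Matrix β δ ℝ} (hP : Pᵀ * P = 1) (hQ : Q * Qᵀ = 1) :
    IsMoorePenrose (P * K * Q) (Qᵀ * K' * Pᵀ) := by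
  obtain ⟨h₁, h₂, h₃, h₄⟩ := h
  have hKK' : P * K * Q * (Qᵀ * K' * Pᵀ) = P * (K * K') * Pᵀ := by
    simp only [Matrix.mul_assoc]
    rw [← Matrix.mul_assoc Q, hQ, Matrix.one_mul]
  have hK'K : Qᵀ * K' * Pᵀ * (P * K * Q) = Qᵀ * (K' * K) * Q := by
    simp only [Matrix.mul_assoc]
    rw [← Matrix.mul_assoc Pᵀ, hP, Matrix.one_mul]
  refine ⟨?_, ?_, ?_, ?_⟩
  · rw [hKK', transpose_mul, transpose_mul, transpose_transpose, h₁, Matrix.mul_assoc P]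
  · rw [hK'K, transpose_mul, transpose_mul, transpose_transpose, h₂, Matrix.mul_assoc Qᵀ]
  · rw [hKK', show P * (K * K') * Pᵀ * (P * K * Q) = P * (K * K' * K) * Q by
      simp only [Matrix.mul_assoc]; rw [← Matrix.mul_assoc Pᵀ, hP, Matrix.one_mul], h₃]
  · rw [hK'K, show Qᵀ * (K' * K) * Q * (Qᵀ * K' * Pᵀ) = Qᵀ * (K' * K * K') * Pᵀ by
      simp only [Matrix.mul_assoc]; rw [← Matrix.mul_assoc Q, hQ, Matrix.one_mul], h₄]

end IsMoorePenrose

theorem IsSign.diagonal_mul_self {α : Type*} [Fintype α] [DecidableEq α] {d : α → ℝ}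
    (hd : IsSign d) : diagonal d * diagonal d = 1 := by
  rw [diagonal_mul_diagonal, ← diagonal_one]
  congr 1
  funext i
  rcases hd i with h | h <;> simp [h]

theorem stmt_2_general {m : ℕ} (A A' : Matrix (Fin m) (Fin m) ℝ) (d : Fin m → ℝ)
    (hMP : IsMoorePenrose A A') (hd : IsSign d) :
    IsMoorePenrose (Matrix.diagonal d * A' * Matrix.diagonal d)
      (Matrix.diagonal d * A * Matrix.diagonal d) ∧
    ∀ C : Matrix (Fin m) (Fin m) ℝ,
      IsMoorePenrose (Matrix.diagonal d * A' * Matrix.diagonal d) C →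
      Matrix.diagonal d * C * Matrix.diagonal d = A := by
  have hDD := hd.diagonal_mul_self
  have hDA'D : IsMoorePenrose (diagonal d * A' * diagonal d) (diagonal d * A * diagonal d) := by
    simpa only [diagonal_transpose] using
      hMP.symm.conj (P := diagonal d) (Q := diagonal d) (by rwa [diagonal_transpose])
        (by rwa [diagonal_transpose])
  refine ⟨hDA'D, fun C hC => ?_⟩
  rw [← hDA'D.unique hC, Matrix.mul_assoc, Matrix.mul_assoc, hDD, Matrix.mul_one,
    ← Matrix.mul_assoc, hDD, Matrix.one_mul]

/-- For a positively pseudo-invertible graph with adjacency matrix `A`, MP inverse `A'` and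
signature `d` with `D A' D ≥ 0`: the MP inverse of `D A' D` is `D A D` (signable by the same `D`),
and `D (D A' D)† D = A`; hence `(G†)† = G`. -/
theorem stmt_2 {m : ℕ} (A A' : Matrix (Fin m) (Fin m) ℝ) (d : Fin m → ℝ)
    (hA : Aᵀ = A) (hnn : ∀ i j, 0 ≤ A i j)
    (hMP : IsMoorePenrose A A') (hd : IsSign d)
    (hpos : ∀ i j, 0 ≤ (Matrix.diagonal d * A' * Matrix.diagonal d) i j) :
    IsMoorePenrose (Matrix.diagonal d * A' * Matrix.diagonal d)
      (Matrix.diagonal d * A * Matrix.diagonal d) ∧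
    ∀ C : Matrix (Fin m) (Fin m) ℝ,
      IsMoorePenrose (Matrix.diagonal d * A' * Matrix.diagonal d) C →
      Matrix.diagonal d * C * Matrix.diagonal d = A :=
  stmt_2_general A A' d hMP hd
end

section
/- For the cycle graph C_m of order m ≡ 0 (mod 4), the Moore-Penrose inverse of its circulant adjacency matrix is the circulant symmetric matrix with entries a†_p = (1/m)(m/2 − |p|)(−1)^((|p|−1)/2) for p odd and a†_p = 0 for p even, where indices are taken modulo m. -/
open Matrix

/-!
Both matrices are circulant, so they commute and all products are circulant. Write `s p`, `c p`
for `sin (π p / 2)`, `cos (π p / 2)`; as `4 ∣ m` they are well defined modulo `m`. For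
`0 ≤ p < m` the claimed inverse has entries `b p = (1/2 - p/m) s p`, and
`b (p - 1) + b (p + 1) = δ₀ p - (2/m) c p`, so `A B = B A = 1 - (2/m) C` with `C` the (symmetric)
circulant of `c`. Since `c (p - 1) + c (p + 1) = 0` we get `C A = 0`, and `B C = 0` because
`c (p - q) = c p c q + s p s q`, `b c = 0` pointwise and `s b` is odd. These give the four
Penrose identities.
-/

open Real

theorem IsMoorePenrose.of_mul_eq_one_sub {n : Type*} [Fintype n] [DecidableEq n]
    {A B C : Matrix n n ℝ} (k : ℝ) (hAB : A * B = 1 - k • C) (hBA : B * A = 1 - k • C)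
    (hC : Cᵀ = C) (hCA : C * A = 0) (hBC : B * C = 0) : IsMoorePenrose A B := by
  have hP : (1 - k • C)ᵀ = 1 - k • C := by
    rw [transpose_sub, transpose_one, transpose_smul, hC]
  refine ⟨by rw [hAB, hP], by rw [hBA, hP], ?_, ?_⟩
  · rw [hAB, sub_mul, one_mul, smul_mul_assoc, hCA, smul_zero, sub_zero]
  · rw [mul_assoc, hAB, mul_sub, mul_one, mul_smul_comm, hBC, smul_zero, sub_zero]

theorem Function.Periodic.apply_val_intCast {α : Type*} {m : ℕ} [NeZero m] {f : ℤ → α}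
    (hf : f.Periodic m) (n : ℤ) : f (n : ZMod m).val = f n := by
  rw [ZMod.val_intCast, Int.emod_def, mul_comm]
  exact hf.sub_int_mul_eq (n / m)

theorem ZMod.val_add_one_of_ne_neg_one {m : ℕ} [NeZero m] {q : ZMod m} (hq : q ≠ -1) :
    (q + 1).val = q.val + 1 := by
  have hcast : q + 1 = ((q.val + 1 : ℕ) : ZMod m) := by push_cast; rw [ZMod.natCast_zmod_val]
  rw [hcast, ZMod.val_natCast, Nat.mod_eq_of_lt]
  refine lt_of_le_of_ne (ZMod.val_lt q) fun h => hq ?_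
  rw [eq_neg_iff_add_eq_zero, hcast, h, ZMod.natCast_self]

theorem Real.sin_pi_mul_natCast_div_two (k : ℕ) :
    sin (π * k / 2) = if Odd k then (-1) ^ ((k - 1) / 2) else 0 := by
  obtain ⟨j, rfl | rfl⟩ := Nat.even_or_odd' k
  · rw [if_neg (Nat.not_odd_iff_even.mpr (even_two_mul j)), ← sin_nat_mul_pi j]
    push_cast; ring_nf
  · rw [if_pos (odd_two_mul_add_one j), show (2 * j + 1 - 1) / 2 = j by omega,
      ← cos_nat_mul_pi j, ← sin_add_pi_div_two]
    push_cast; ring_nf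

theorem Real.periodic_comp_pi_mul_intCast_div_two {f : ℝ → ℝ} (hf : f.Periodic (2 * π))
    {m : ℕ} (hm : 4 ∣ m) : (fun n : ℤ => f (π * n / 2)).Periodic m := by
  obtain ⟨k, rfl⟩ := hm
  have h4 : (fun n : ℤ => f (π * n / 2)).Periodic 4 := fun n => by
    simp only [Int.cast_add, Int.cast_ofNat, mul_add]
    rw [← hf (π * n / 2)]; ring_nf
  simpa [mul_comm] using h4.nat_mul k

namespace CyclePinv

noncomputable def adjSeq (m : ℕ) (q : ZMod m) : ℝ := if q = 1 ∨ q = -1 then 1 else 0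

noncomputable def cosSeq (m : ℕ) (q : ZMod m) : ℝ := cos (π * q.val / 2)

noncomputable def sinSeq (m : ℕ) (q : ZMod m) : ℝ := sin (π * q.val / 2)

noncomputable def pinvSeq (m : ℕ) (q : ZMod m) : ℝ := (1 / 2 - q.val / m) * sinSeq m q

variable {m : ℕ}

theorem circulant_adjSeq_mul_circulant [NeZero m] (h : (1 : ZMod m) ≠ -1) (w : ZMod m → ℝ) :
    circulant (adjSeq m) * circulant w = circulant fun q => w (q - 1) + w (q + 1) := by
  rw [circulant_mul]
  congr 1
  funext q
  have hne : q - 1 ≠ q + 1 := fun e => h (by linear_combination -e)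
  have h1 (j : ZMod m) : q - j = 1 ↔ j = q - 1 := by
    constructor <;> intro e <;> linear_combination -e
  have h2 (j : ZMod m) : q - j = -1 ↔ j = q + 1 := by
    constructor <;> intro e <;> linear_combination -e
  have hterm (j : ZMod m) : adjSeq m (q - j) * w j =
      (if j = q - 1 then w j else 0) + (if j = q + 1 then w j else 0) := by
    by_cases hj : j = q - 1
    · simp [adjSeq, hj, hne]
    · simp [adjSeq, h1, h2, hj]
  simp only [mulVec, dotProduct, circulant_apply, hterm, Finset.sum_add_distrib,
    Finset.sum_ite_eq', Finset.mem_univ, if_true]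

theorem cosSeq_intCast [NeZero m] (hm : 4 ∣ m) (n : ℤ) : cosSeq m n = cos (π * n / 2) := by
  simpa only [cosSeq, Int.cast_natCast] using
    (periodic_comp_pi_mul_intCast_div_two cos_periodic hm).apply_val_intCast n

theorem sinSeq_intCast [NeZero m] (hm : 4 ∣ m) (n : ℤ) : sinSeq m n = sin (π * n / 2) := by
  simpa only [sinSeq, Int.cast_natCast] using
    (periodic_comp_pi_mul_intCast_div_two sin_periodic hm).apply_val_intCast n

theorem cosSeq_even [NeZero m] (hm : 4 ∣ m) : (cosSeq m).Even := fun q => by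
  obtain ⟨n, rfl⟩ := ZMod.intCast_surjective q
  rw [← Int.cast_neg, cosSeq_intCast hm, cosSeq_intCast hm, Int.cast_neg, mul_neg, neg_div,
    cos_neg]

theorem sinSeq_odd [NeZero m] (hm : 4 ∣ m) : (sinSeq m).Odd := fun q => by
  obtain ⟨n, rfl⟩ := ZMod.intCast_surjective q
  rw [← Int.cast_neg, sinSeq_intCast hm, sinSeq_intCast hm, Int.cast_neg, mul_neg, neg_div,
    sin_neg]

theorem cosSeq_sub [NeZero m] (hm : 4 ∣ m) (p q : ZMod m) :
    cosSeq m (p - q) = cosSeq m p * cosSeq m q + sinSeq m p * sinSeq m q := by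
  have hpq : (((p.val : ℤ) - q.val : ℤ) : ZMod m) = p - q := by
    simp only [Int.cast_sub, Int.cast_natCast, ZMod.natCast_zmod_val]
  rw [← hpq, cosSeq_intCast hm, Int.cast_sub, mul_sub, sub_div, cos_sub]
  rfl

theorem cosSeq_sub_one_add_cosSeq_add_one [NeZero m] (hm : 4 ∣ m) (q : ZMod m) :
    cosSeq m (q - 1) + cosSeq m (q + 1) = 0 := by
  obtain ⟨n, rfl⟩ := ZMod.intCast_surjective q
  rw [← Int.cast_one, ← Int.cast_sub, ← Int.cast_add, cosSeq_intCast hm, cosSeq_intCast hm]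
  push_cast
  rw [mul_sub, mul_add, sub_div, add_div, mul_one, cos_sub_pi_div_two, cos_add_pi_div_two,
    add_neg_cancel]

theorem sinSeq_mul_cosSeq (q : ZMod m) : sinSeq m q * cosSeq m q = 0 := by
  rw [sinSeq, cosSeq, ← mul_div_cancel_left₀ (sin _ * _) two_ne_zero, ← mul_assoc,
    ← sin_two_mul, show 2 * (π * q.val / 2) = q.val * π by ring, sin_nat_mul_pi, zero_div]

theorem pinvSeq_even [NeZero m] (hm : 4 ∣ m) : (pinvSeq m).Even := fun q => by
  rcases eq_or_ne q 0 with rfl | hq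
  · rw [neg_zero]
  have hm0 : (m : ℝ) ≠ 0 := Nat.cast_ne_zero.mpr (NeZero.ne m)
  rw [pinvSeq, pinvSeq, sinSeq_odd hm, ZMod.neg_val, if_neg hq,
    Nat.cast_sub (ZMod.val_lt q).le]
  field_simp
  ring

theorem circulant_cosSeq_mulVec_pinvSeq [NeZero m] (hm : 4 ∣ m) :
    circulant (cosSeq m) *ᵥ pinvSeq m = 0 := by
  have hcos (j : ZMod m) : cosSeq m j * pinvSeq m j = 0 := by
    rw [pinvSeq, mul_left_comm, mul_comm (cosSeq m j), sinSeq_mul_cosSeq, mul_zero]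
  have hsin : ∑ j, sinSeq m j * pinvSeq m j = 0 :=
    ((sinSeq_odd hm).mul_even (pinvSeq_even hm)).sum_eq_zero
  funext i
  calc ∑ j, cosSeq m (i - j) * pinvSeq m j
      = cosSeq m i * ∑ j, cosSeq m j * pinvSeq m j +
          sinSeq m i * ∑ j, sinSeq m j * pinvSeq m j := by
        simp only [cosSeq_sub hm, add_mul, Finset.sum_add_distrib, Finset.mul_sum, mul_assoc]
    _ = 0 := by simp [hcos, hsin]

theorem pinvSeq_sub_one_add_pinvSeq_add_one [NeZero m] (hm : 4 ∣ m) (q : ZMod m) :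
    pinvSeq m (q - 1) + pinvSeq m (q + 1) =
      (Pi.single 0 1 : ZMod m → ℝ) q - 2 / m * cosSeq m q := by
  have : Fact (1 < m) := ⟨by obtain ⟨k, rfl⟩ := hm; have := NeZero.ne (4 * k); omega⟩
  have hm0 : (m : ℝ) ≠ 0 := Nat.cast_ne_zero.mpr (NeZero.ne m)
  rcases eq_or_ne q 0 with rfl | hq0
  · rw [zero_sub, zero_add, pinvSeq_even hm, ← two_mul, Pi.single_eq_same, pinvSeq, sinSeq,
      cosSeq, ZMod.val_one, ZMod.val_zero]
    simp only [Nat.cast_one, Nat.cast_zero, mul_one, mul_zero, zero_div, sin_pi_div_two, cos_zero]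
    field_simp
  rcases eq_or_ne q (-1) with rfl | hq1
  · have hsin : sinSeq m (-1 - 1) = 0 := by
      rw [show (-1 - 1 : ZMod m) = ((-2 : ℤ) : ZMod m) by push_cast; ring, sinSeq_intCast hm]
      simp only [Int.cast_neg, Int.cast_ofNat]
      rw [show π * -2 / 2 = -π by ring, sin_neg, sin_pi, neg_zero]
    rw [neg_add_cancel, pinvSeq, hsin, Pi.single_eq_of_ne hq0, cosSeq_even hm, cosSeq,
      ZMod.val_one, pinvSeq, sinSeq, ZMod.val_zero]
    simp
  have hv : q.val = (q - 1).val + 1 := by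
    have hq : q - 1 ≠ -1 := fun h => hq0 (by linear_combination h)
    simpa using ZMod.val_add_one_of_ne_neg_one hq
  have hw : (q + 1).val = (q - 1).val + 2 := by rw [ZMod.val_add_one_of_ne_neg_one hq1, hv]
  simp only [pinvSeq, sinSeq, cosSeq, Pi.single_eq_of_ne hq0, hv, hw]
  generalize (q - 1).val = u
  push_cast
  rw [show π * (u + 2) / 2 = π * u / 2 + π by ring,
    show π * (u + 1) / 2 = π * u / 2 + π / 2 by ring, sin_add_pi, cos_add_pi_div_two]
  field_simp
  ring

theorem pinvSeq_eq_of_eq_min [NeZero m] (hm : 4 ∣ m) {q : ZMod m} {k : ℕ}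
    (hk : k = min q.val (m - q.val)) :
    pinvSeq m q =
      if Odd k then 1 / (m : ℝ) * ((m : ℝ) / 2 - k) * (-1) ^ ((k - 1) / 2) else 0 := by
  have hsin : pinvSeq m q = (1 / 2 - k / m) * sin (π * k / 2) := by
    rcases le_total q.val (m - q.val) with h | h
    · rw [hk, min_eq_left h]
      rfl
    · have hq : q ≠ 0 := by
        rintro rfl
        exact NeZero.ne m (by simpa using h)
      rw [hk, min_eq_right h, ← pinvSeq_even hm, pinvSeq, sinSeq, ZMod.neg_val, if_neg hq]
  have hm0 : (m : ℝ) ≠ 0 := Nat.cast_ne_zero.mpr (NeZero.ne m)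
  rw [hsin, sin_pi_mul_natCast_div_two]
  split_ifs
  · field_simp
  · rw [mul_zero]

theorem isMoorePenrose_circulant_adjSeq [NeZero m] (hm : 4 ∣ m) :
    IsMoorePenrose (circulant (adjSeq m)) (circulant (pinvSeq m)) := by
  have : Fact (2 < m) := ⟨by obtain ⟨k, rfl⟩ := hm; have := NeZero.ne (4 * k); omega⟩
  have h1 : (1 : ZMod m) ≠ -1 := ZMod.neg_one_ne_one.symm
  have hAB : circulant (adjSeq m) * circulant (pinvSeq m) =
      1 - (2 / m : ℝ) • circulant (cosSeq m) := by
    rw [circulant_adjSeq_mul_circulant h1, ← circulant_single_one ℝ (ZMod m),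
      ← circulant_smul, ← circulant_sub]
    congr 1
    funext q
    exact pinvSeq_sub_one_add_pinvSeq_add_one hm q
  refine IsMoorePenrose.of_mul_eq_one_sub (2 / m) hAB (by rw [circulant_mul_comm, hAB])
    ?_ ?_ ?_
  · rw [transpose_circulant]
    congr 1
    funext q
    exact cosSeq_even hm q
  · rw [circulant_mul_comm, circulant_adjSeq_mul_circulant h1, ← circulant_zero]
    congr 1
    funext q
    exact cosSeq_sub_one_add_cosSeq_add_one hm q
  · rw [circulant_mul_comm, circulant_mul, circulant_cosSeq_mulVec_pinvSeq hm, circulant_zero]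

end CyclePinv

open CyclePinv in
/-- For the cycle `C_m` with `m ≡ 0 (mod 4)`, the Moore-Penrose inverse of the circulant
adjacency matrix is the circulant symmetric matrix with entries
`a†_p = (1/m)(m/2 − |p|)(−1)^((|p|−1)/2)` for `p` odd and `a†_p = 0` for `p` even,
where `|p| = min((i−j).val, m − (i−j).val)` is the absolute value of the residue `i−j`. -/
theorem stmt_4 (m : ℕ) [NeZero m] (h4 : m % 4 = 0)
    (A : Matrix (ZMod m) (ZMod m) ℝ)
    (hA : ∀ i j, A i j = if i - j = 1 ∨ j - i = 1 then 1 else 0) :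
    IsMoorePenrose A (Matrix.of fun i j =>
      if Odd (min ((i - j).val) (m - (i - j).val)) then
        (1 / (m : ℝ)) * ((m : ℝ) / 2 - (min ((i - j).val) (m - (i - j).val) : ℕ)) *
          (-1 : ℝ) ^ ((min ((i - j).val) (m - (i - j).val) - 1) / 2)
      else 0) := by
  have hm : 4 ∣ m := Nat.dvd_of_mod_eq_zero h4
  convert isMoorePenrose_circulant_adjSeq hm using 1
  · ext i j
    simp only [hA, circulant_apply, adjSeq, ← neg_sub i j, neg_eq_iff_eq_neg]
  · ext i j
    exact (pinvSeq_eq_of_eq_min hm rfl).symm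
end

section
/- For the path graph P_m of odd order m ≥ 5, the Moore-Penrose inverse A† of the adjacency matrix is neither positively nor negatively signable. -/
open Matrix

/-!
Since `A` is symmetric, `A * A'` is the orthogonal projection onto the range of `A`, the
orthogonal complement of `ker A`. For odd `m` that kernel is spanned by
`v = (1, 0, -1, 0, 1, …)`, so `A * A' = 1 - t • v vᵀ` with `t = 1 / ‖v‖² ≤ 1 / 3`. Rows `0` and
`2` of `A * A'` are `A'₁` and `A'₁ + A'₃` (indices from `0`), which gives `A'₁₀ = 1 - t`,
`A'₁₂ = t`, `A'₃₀ = 2t - 1` and `A'₃₂ = 1 - 2t`. Their product is negative, whereas conjugating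
by a `±1` diagonal matrix does not change the product of the entries around the cycle
`1 → 0 → 3 → 2 → 1`, and a matrix of constant sign has a nonnegative such product.
-/

open SimpleGraph Finset

section MoorePenrose

variable {n : Type*} [Fintype n] [DecidableEq n]

theorem mul_eq_one_sub_vecMulVec_of_ker_eq_span {A A' : Matrix n n ℝ} (hsymm : Aᵀ = A)
    (hproj : (A * A')ᵀ = A * A') (hAA'A : A * A' * A = A) {v : n → ℝ} (hv : A *ᵥ v = 0)
    (hker : ∀ y, A *ᵥ y = 0 → ∃ c : ℝ, y = c • v) :
    A * A' = 1 - (v ⬝ᵥ v)⁻¹ • vecMulVec v v := by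
  set Q := 1 - A * A' with hQ
  have hAQ : A * Q = 0 := by
    have h := congrArg transpose hAA'A
    rw [transpose_mul, hproj, hsymm] at h
    rw [hQ, Matrix.mul_sub, Matrix.mul_one, h, sub_self]
  have hvQ : v ᵥ* Q = v := by
    have hvA : v ᵥ* A = 0 := by rw [← mulVec_transpose, hsymm, hv]
    rw [hQ, vecMul_sub, vecMul_one, ← vecMul_vecMul, hvA, zero_vecMul, sub_zero]
  choose c hc using fun k => hker (fun i => Q i k) (funext fun i => congrFun₂ hAQ i k)
  have hQc : Q = vecMulVec v c := by
    ext i k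
    simpa [vecMulVec_apply, mul_comm] using congrFun (hc k) i
  have hc' : (v ⬝ᵥ v) • c = v := by rw [← vecMul_vecMulVec, ← hQc, hvQ]
  suffices Q = (v ⬝ᵥ v)⁻¹ • vecMulVec v v by rw [← this, hQ, sub_sub_cancel]
  by_cases hv0 : v = 0
  · simp [hQc, hv0]
  · have hcv : c = (v ⬝ᵥ v)⁻¹ • v := by
      rwa [eq_inv_smul_iff₀ (dotProduct_self_eq_zero.not.mpr hv0)]
    rw [hQc, hcv, vecMulVec_smul]

end MoorePenrose

theorem not_signable_of_cycle_prod_neg {n : Type*} [Fintype n] [DecidableEq n]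
    (B : Matrix n n ℝ) {i j k l : n} (h : B i j * B i l * B k j * B k l < 0) :
    (¬ ∃ d : n → ℝ, IsSign d ∧ ∀ a b, 0 ≤ (diagonal d * B * diagonal d) a b) ∧
    (¬ ∃ d : n → ℝ, IsSign d ∧ ∀ a b, (diagonal d * B * diagonal d) a b ≤ 0) := by
  have hcycle : ∀ d : n → ℝ, IsSign d →
      (diagonal d * B * diagonal d) i j * (diagonal d * B * diagonal d) i l *
        (diagonal d * B * diagonal d) k j * (diagonal d * B * diagonal d) k l =
      B i j * B i l * B k j * B k l := by
    intro d hd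
    have hsq : ∀ x, d x * d x = 1 := fun x => by rcases hd x with hx | hx <;> simp [hx]
    simp only [mul_diagonal, diagonal_mul]
    calc _ = (d i * d i) * (d j * d j) * (d k * d k) * (d l * d l)
          * (B i j * B i l * B k j * B k l) := by ring
      _ = _ := by simp [hsq]
  constructor
  · rintro ⟨d, hd, hnn⟩
    refine h.not_ge (hcycle d hd ▸ ?_)
    exact mul_nonneg (mul_nonneg (mul_nonneg (hnn i j) (hnn i l)) (hnn k j)) (hnn k l)
  · rintro ⟨d, hd, hnp⟩
    refine h.not_ge (hcycle d hd ▸ ?_)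
    exact mul_nonneg_of_nonpos_of_nonpos
      (mul_nonpos_of_nonneg_of_nonpos (mul_nonneg_of_nonpos_of_nonpos (hnp i j) (hnp i l))
        (hnp k j)) (hnp k l)

def pathKernelSeq : ℕ → ℝ
  | 0 => 1
  | 1 => 0
  | n + 2 => -pathKernelSeq n

theorem pathKernelSeq_odd {n : ℕ} (hn : Odd n) : pathKernelSeq n = 0 := by
  induction n using Nat.twoStepInduction with
  | zero => simp at hn
  | one => rfl
  | more n ih _ => simp [pathKernelSeq, ih (by simpa [parity_simps] using hn)]

instance (m : ℕ) : DecidableRel (pathGraph m).Adj := fun _ _ => decidable_of_iff' _ pathGraph_adj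

section PathGraph

variable {m : ℕ}

theorem pathGraph_adjMatrix_mulVec_zero (hm : 0 < m) (y : Fin m → ℝ) :
    ((pathGraph m).adjMatrix ℝ *ᵥ y) ⟨0, hm⟩ = if h : 1 < m then y ⟨1, h⟩ else 0 := by
  rw [adjMatrix_mulVec_apply]
  split_ifs with h
  · rw [show (pathGraph m).neighborFinset ⟨0, hm⟩ = {⟨1, h⟩} by
      ext j; simp [pathGraph_adj, Fin.ext_iff]; omega, sum_singleton]
  · rw [show (pathGraph m).neighborFinset ⟨0, hm⟩ = ∅ by
      ext j; simp [pathGraph_adj]; omega, sum_empty]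

theorem pathGraph_adjMatrix_mulVec_succ {k : ℕ} (hk : k + 1 < m) (y : Fin m → ℝ) :
    ((pathGraph m).adjMatrix ℝ *ᵥ y) ⟨k + 1, hk⟩ =
      y ⟨k, by omega⟩ + if h : k + 2 < m then y ⟨k + 2, h⟩ else 0 := by
  rw [adjMatrix_mulVec_apply]
  split_ifs with h
  · rw [show (pathGraph m).neighborFinset ⟨k + 1, hk⟩ = {⟨k, by omega⟩, ⟨k + 2, h⟩} by
      ext j; simp [pathGraph_adj, Fin.ext_iff]; omega, sum_pair (by simp [Fin.ext_iff])]
  · rw [show (pathGraph m).neighborFinset ⟨k + 1, hk⟩ = {⟨k, by omega⟩} by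
      ext j; simp [pathGraph_adj, Fin.ext_iff]; omega, sum_singleton, add_zero]

theorem pathGraph_adjMatrix_mulVec_pathKernelSeq (hm : Odd m) :
    (pathGraph m).adjMatrix ℝ *ᵥ (fun i : Fin m => pathKernelSeq i) = 0 := by
  funext ⟨i, hi⟩
  rcases i with _ | k
  · rw [pathGraph_adjMatrix_mulVec_zero]
    split_ifs <;> rfl
  · rw [pathGraph_adjMatrix_mulVec_succ]
    split_ifs with h
    · simp [pathKernelSeq]
    · have hk : Odd k := by
        obtain ⟨r, rfl⟩ := hm
        exact ⟨r - 1, by omega⟩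
      simp [pathKernelSeq_odd hk]

theorem eq_smul_pathKernelSeq_of_mulVec_eq_zero {y : Fin m → ℝ}
    (hy : (pathGraph m).adjMatrix ℝ *ᵥ y = 0) :
    ∃ c : ℝ, y = c • fun i : Fin m => pathKernelSeq i := by
  rcases Nat.eq_zero_or_pos m with rfl | hm
  · exact ⟨0, Subsingleton.elim _ _⟩
  refine ⟨y ⟨0, hm⟩, funext fun ⟨i, hi⟩ => ?_⟩
  induction i using Nat.twoStepInduction with
  | zero => simp [pathKernelSeq]
  | one =>
    have h0 := congrFun hy ⟨0, hm⟩
    rw [pathGraph_adjMatrix_mulVec_zero, dif_pos hi] at h0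
    simpa [pathKernelSeq] using h0
  | more k ih _ =>
    have hk := congrFun hy ⟨k + 1, by omega⟩
    rw [pathGraph_adjMatrix_mulVec_succ, dif_pos hi, Pi.zero_apply] at hk
    simp only [Pi.smul_apply, smul_eq_mul, pathKernelSeq] at ih ⊢
    linarith [ih (by omega)]

theorem three_le_pathKernelSeq_dotProduct_self (hm : 5 ≤ m) :
    3 ≤ (fun i : Fin m => pathKernelSeq i) ⬝ᵥ (fun i => pathKernelSeq i) := by
  rw [dotProduct, Fin.sum_univ_eq_sum_range (fun i => pathKernelSeq i * pathKernelSeq i)]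
  calc (3 : ℝ) = ∑ i ∈ range 5, pathKernelSeq i * pathKernelSeq i := by
        norm_num [sum_range_succ, pathKernelSeq]
    _ ≤ _ := sum_le_sum_of_subset_of_nonneg (range_subset_range.2 hm) fun i _ _ => mul_self_nonneg _

theorem pathGraph_pinv_cycle_prod_neg (hm : Odd m) (h5 : 5 ≤ m) {A' : Matrix (Fin m) (Fin m) ℝ}
    (hproj : ((pathGraph m).adjMatrix ℝ * A')ᵀ = (pathGraph m).adjMatrix ℝ * A')
    (hAA'A : (pathGraph m).adjMatrix ℝ * A' * (pathGraph m).adjMatrix ℝ =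
      (pathGraph m).adjMatrix ℝ) :
    A' ⟨1, by omega⟩ ⟨0, by omega⟩ * A' ⟨1, by omega⟩ ⟨2, by omega⟩ *
      A' ⟨3, by omega⟩ ⟨0, by omega⟩ * A' ⟨3, by omega⟩ ⟨2, by omega⟩ < 0 := by
  set A := (pathGraph m).adjMatrix ℝ
  set v : Fin m → ℝ := fun i => pathKernelSeq i
  set t := (v ⬝ᵥ v)⁻¹
  have hP : A * A' = 1 - t • vecMulVec v v :=
    mul_eq_one_sub_vecMulVec_of_ker_eq_span (transpose_adjMatrix _) hproj hAA'A
      (pathGraph_adjMatrix_mulVec_pathKernelSeq hm)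
      fun _ => eq_smul_pathKernelSeq_of_mulVec_eq_zero
  have hcol (i k : Fin m) : (A * A') i k = (A *ᵥ fun j => A' j k) i := rfl
  have row0 (k : Fin m) : A' ⟨1, by omega⟩ k = (A * A') ⟨0, by omega⟩ k := by
    rw [hcol, pathGraph_adjMatrix_mulVec_zero, dif_pos (by omega)]
  have row2 (k : Fin m) : A' ⟨3, by omega⟩ k = (A * A') ⟨2, by omega⟩ k - A' ⟨1, by omega⟩ k := by
    rw [hcol, pathGraph_adjMatrix_mulVec_succ (k := 1), dif_pos (by omega)]
    ring
  have hentry (i k : Fin m) : (A * A') i k = (if i = k then 1 else 0) - t * (v i * v k) := by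
    rw [hP, Matrix.sub_apply, one_apply, Matrix.smul_apply, vecMulVec_apply, smul_eq_mul]
  have h10 : A' ⟨1, by omega⟩ ⟨0, by omega⟩ = 1 - t := by
    rw [row0, hentry]; simp [v, pathKernelSeq]
  have h12 : A' ⟨1, by omega⟩ ⟨2, by omega⟩ = t := by
    rw [row0, hentry]; simp [v, pathKernelSeq]
  have h30 : A' ⟨3, by omega⟩ ⟨0, by omega⟩ = 2 * t - 1 := by
    rw [row2, h10, hentry]; simp [v, pathKernelSeq]; ring
  have h32 : A' ⟨3, by omega⟩ ⟨2, by omega⟩ = 1 - 2 * t := by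
    rw [row2, h12, hentry]; simp [v, pathKernelSeq]; ring
  have hS : 3 ≤ v ⬝ᵥ v := three_le_pathKernelSeq_dotProduct_self h5
  have ht0 : 0 < t := inv_pos.2 (by linarith)
  have ht_le : t ≤ 3⁻¹ := inv_anti₀ (by norm_num) hS
  calc _ = -((1 - t) * t * (1 - 2 * t) ^ 2) := by rw [h10, h12, h30, h32]; ring
    _ < 0 :=
      neg_neg_of_pos (mul_pos (mul_pos (by linarith) ht0) (pow_pos (by linarith) 2))

end PathGraph

/-- For the path `P_m` of odd order `m ≥ 5`, the Moore-Penrose inverse of the adjacency matrix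
is neither positively nor negatively signable. -/
theorem stmt_9 (m : ℕ) (hm : Odd m) (h5 : 5 ≤ m)
    (A A' : Matrix (Fin m) (Fin m) ℝ)
    (hA : ∀ i j : Fin m, A i j = if (i : ℕ) + 1 = j ∨ (j : ℕ) + 1 = i then 1 else 0)
    (hMP : IsMoorePenrose A A') :
    (¬ ∃ d : Fin m → ℝ, IsSign d ∧
        ∀ i j, 0 ≤ (Matrix.diagonal d * A' * Matrix.diagonal d) i j) ∧
    (¬ ∃ d : Fin m → ℝ, IsSign d ∧
        ∀ i j, (Matrix.diagonal d * A' * Matrix.diagonal d) i j ≤ 0) := by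
  obtain ⟨hproj, -, hAA'A, -⟩ := hMP
  obtain rfl : A = (pathGraph m).adjMatrix ℝ := by
    ext i j
    simp [hA, adjMatrix_apply, pathGraph_adj]
  exact not_signable_of_cycle_prod_neg A' (pathGraph_pinv_cycle_prod_neg hm h5 hproj hAA'A)
end

section
/- The complete bipartite graph K_{m₁,m₂} is both positively and negatively pseudo-invertible, and the Moore-Penrose inverse of its adjacency matrix A satisfies A† = (1/(m₁m₂)) A. -/
open Matrix

/-! A symmetric matrix with `A³ = c A`, `c ≠ 0`, has Moore-Penrose inverse `c⁻¹ A`. The adjacency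
matrix of `K_{m₁,m₂}` is such a matrix with `c = m₁ m₂`, because `E Eᵀ E = m₁ m₂ E` for the all-ones
block `E`. Its pseudo-inverse is entrywise nonnegative, and, being block off-diagonal, it changes
sign under conjugation by the signature `diag(I, -I)` of the bipartition. -/

namespace Matrix

theorem isMoorePenrose_inv_smul_self {n : Type*} [Fintype n] {A : Matrix n n ℝ} {c : ℝ}
    (hc : c ≠ 0) (hA : Aᵀ = A) (hA3 : A * A * A = c • A) : IsMoorePenrose A (c⁻¹ • A) := by
  refine ⟨?_, ?_, ?_, ?_⟩
  · rw [Matrix.mul_smul, transpose_smul, transpose_mul, hA]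
  · rw [Matrix.smul_mul, transpose_smul, transpose_mul, hA]
  · rw [Matrix.mul_smul, Matrix.smul_mul, hA3, smul_smul, inv_mul_cancel₀ hc, one_smul]
  · rw [Matrix.smul_mul, Matrix.smul_mul, Matrix.mul_smul, hA3, smul_smul, smul_smul,
      mul_assoc, inv_mul_cancel₀ hc, mul_one]

variable {R : Type*} {m n : Type*} [Fintype m] [Fintype n]

theorem fromBlocks_zero_mul_self_mul_self [Ring R] (B : Matrix m n R) (C : Matrix n m R) :
    fromBlocks 0 B C 0 * fromBlocks 0 B C 0 * fromBlocks 0 B C 0 =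
      fromBlocks 0 (B * C * B) (C * B * C) 0 := by
  simp only [fromBlocks_multiply, Matrix.mul_zero, Matrix.zero_mul, add_zero, zero_add]

theorem mul_transpose_mul_of_forall_eq_one [CommSemiring R] {E : Matrix m n R}
    (hE : ∀ i j, E i j = 1) :
    E * Eᵀ * E = ((Fintype.card m : R) * Fintype.card n) • E := by
  ext i j
  simp [mul_apply, hE]

theorem diagonal_sumElim_one_neg_one_conj_fromBlocks_zero [Ring R] [DecidableEq m]
    [DecidableEq n] (B : Matrix m n R) (C : Matrix n m R) :
    diagonal (Sum.elim 1 (-1)) * fromBlocks 0 B C 0 * diagonal (Sum.elim 1 (-1)) =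
      -fromBlocks 0 B C 0 := by
  ext (i | i) (j | j) <;> simp [diagonal_mul, mul_diagonal]

end Matrix

theorem isSign_sumElim_one_neg_one {α β : Type*} : IsSign (Sum.elim (1 : α → ℝ) (-1 : β → ℝ)) := by
  rintro (i | i) <;> simp

/-- The complete bipartite graph `K_{m₁,m₂}` is positively and negatively pseudo-invertible,
with Moore-Penrose inverse `A† = (1/(m₁m₂)) A` of its adjacency matrix `A = [[0,E],[Eᵀ,0]]`. -/
theorem stmt_13 (m₁ m₂ : ℕ) (h₁ : 0 < m₁) (h₂ : 0 < m₂)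
    (E : Matrix (Fin m₁) (Fin m₂) ℝ) (hE : ∀ i j, E i j = 1)
    (A : Matrix (Fin m₁ ⊕ Fin m₂) (Fin m₁ ⊕ Fin m₂) ℝ)
    (hA : A = Matrix.fromBlocks 0 E Eᵀ 0) :
    IsMoorePenrose A ((1 / ((m₁ : ℝ) * (m₂ : ℝ))) • A) ∧
    (∃ d : Fin m₁ ⊕ Fin m₂ → ℝ, IsSign d ∧
      ∀ i j, 0 ≤ (Matrix.diagonal d * ((1 / ((m₁:ℝ)*(m₂:ℝ))) • A) * Matrix.diagonal d) i j) ∧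
    (∃ d : Fin m₁ ⊕ Fin m₂ → ℝ, IsSign d ∧
      ∀ i j, (Matrix.diagonal d * ((1 / ((m₁:ℝ)*(m₂:ℝ))) • A) * Matrix.diagonal d) i j ≤ 0) := by
  have hc : (m₁ : ℝ) * m₂ ≠ 0 := by positivity
  have hEEE : E * Eᵀ * E = ((m₁ : ℝ) * m₂) • E := by
    simpa using mul_transpose_mul_of_forall_eq_one hE
  have hA3 : A * A * A = ((m₁ : ℝ) * m₂) • A := by
    have hETE : Eᵀ * E * Eᵀ = ((m₁ : ℝ) * m₂) • Eᵀ := by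
      rw [← transpose_smul, ← hEEE]
      simp only [transpose_mul, transpose_transpose, Matrix.mul_assoc]
    rw [hA, fromBlocks_zero_mul_self_mul_self, hEEE, hETE, fromBlocks_smul, smul_zero, smul_zero]
  have hAinv : (1 / ((m₁ : ℝ) * m₂)) • A = fromBlocks 0 ((1 / ((m₁ : ℝ) * m₂)) • E)
      ((1 / ((m₁ : ℝ) * m₂)) • Eᵀ) 0 := by
    rw [hA, fromBlocks_smul, smul_zero, smul_zero]
  have hAinv_nonneg : ∀ i j, 0 ≤ ((1 / ((m₁ : ℝ) * m₂)) • A) i j := by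
    rw [hAinv]
    rintro (i | i) (j | j) <;> simp [hE] <;> positivity
  refine ⟨?_, ⟨1, fun _ => Or.inl rfl, ?_⟩, ⟨Sum.elim 1 (-1), isSign_sumElim_one_neg_one, ?_⟩⟩
  · rw [one_div]
    exact isMoorePenrose_inv_smul_self hc (by simp [hA, fromBlocks_transpose]) hA3
  · simpa [diagonal_one] using hAinv_nonneg
  · rw [hAinv, diagonal_sumElim_one_neg_one_conj_fromBlocks_zero, ← hAinv]
    intro i j
    simpa using hAinv_nonneg i j
end

section
/- Let K = 𝟏𝟏ᵀ − e₁e₁ᵀ be the m×m matrix (all ones except a 0 in the (1,1) entry), with m ≥ 2. Then the Moore-Penrose inverse of K is K† = (1/(m−1))(e₁𝟏ᵀ + 𝟏e₁ᵀ − (m+1)e₁e₁ᵀ). -/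
/-!
Write `K = o oᵀ - e eᵀ` with `o = 𝟏`, `e = e₁`, and note that only the Gram data
`o ⬝ o = m`, `e ⬝ e = o ⬝ e = 1` enter any product of such rank-one matrices. With
`K' = (m - 1)⁻¹ (e oᵀ + o eᵀ - (m + 1) e eᵀ)` both `K K'` and `K' K` equal
`P = (m - 1)⁻¹ (o oᵀ - o eᵀ - e oᵀ + m e eᵀ)`, the orthogonal projector onto `span {o, e}`.
`P` is symmetric and fixes `K` and `K'`, whose columns lie in that span, which gives all four
Penrose equations.
-/

open Matrix

section OuterDiff

variable {𝕜 ι : Type*} [Field 𝕜]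

def outerDiff (o e : ι → 𝕜) : Matrix ι ι 𝕜 := vecMulVec o o - vecMulVec e e

noncomputable def outerDiffPinv (n : 𝕜) (o e : ι → 𝕜) : Matrix ι ι 𝕜 :=
  (n - 1)⁻¹ • (vecMulVec e o + vecMulVec o e - (n + 1) • vecMulVec e e)

noncomputable def outerDiffProj (n : 𝕜) (o e : ι → 𝕜) : Matrix ι ι 𝕜 :=
  (n - 1)⁻¹ • (vecMulVec o o - vecMulVec o e - vecMulVec e o + n • vecMulVec e e)

variable {n : 𝕜} {o e : ι → 𝕜}

lemma transpose_outerDiffProj : (outerDiffProj n o e)ᵀ = outerDiffProj n o e := by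
  simp only [outerDiffProj, transpose_smul, transpose_add, transpose_sub, transpose_vecMulVec]
  module

variable [Fintype ι]

lemma outerDiff_mul_outerDiffPinv (hoo : o ⬝ᵥ o = n) (hee : e ⬝ᵥ e = 1) (hoe : o ⬝ᵥ e = 1) :
    outerDiff o e * outerDiffPinv n o e = outerDiffProj n o e := by
  simp only [outerDiff, outerDiffPinv, outerDiffProj, Matrix.mul_add, Matrix.sub_mul,
    Matrix.mul_sub, Matrix.mul_smul, vecMulVec_mul_vecMulVec, hoo, hee, hoe, dotProduct_comm e o,
    vecMulVec_smul, one_smul]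
  module

lemma outerDiffPinv_mul_outerDiff (hoo : o ⬝ᵥ o = n) (hee : e ⬝ᵥ e = 1) (hoe : o ⬝ᵥ e = 1) :
    outerDiffPinv n o e * outerDiff o e = outerDiffProj n o e := by
  simp only [outerDiff, outerDiffPinv, outerDiffProj, Matrix.add_mul, Matrix.sub_mul,
    Matrix.mul_sub, Matrix.smul_mul, vecMulVec_mul_vecMulVec, hoo, hee, hoe, dotProduct_comm e o,
    vecMulVec_smul, one_smul]
  module

lemma outerDiffProj_mul_outerDiff (hoo : o ⬝ᵥ o = n) (hee : e ⬝ᵥ e = 1) (hoe : o ⬝ᵥ e = 1)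
    (hn : n ≠ 1) : outerDiffProj n o e * outerDiff o e = outerDiff o e := by
  have hn' : n - 1 ≠ 0 := sub_ne_zero.mpr hn
  simp only [outerDiff, outerDiffProj, Matrix.add_mul, Matrix.sub_mul, Matrix.mul_sub,
    Matrix.smul_mul, vecMulVec_mul_vecMulVec, hoo, hee, hoe, dotProduct_comm e o,
    vecMulVec_smul, one_smul]
  match_scalars <;> field_simp <;> ring

lemma outerDiffProj_mul_outerDiffPinv (hoo : o ⬝ᵥ o = n) (hee : e ⬝ᵥ e = 1) (hoe : o ⬝ᵥ e = 1)
    (hn : n ≠ 1) : outerDiffProj n o e * outerDiffPinv n o e = outerDiffPinv n o e := by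
  have hn' : n - 1 ≠ 0 := sub_ne_zero.mpr hn
  simp only [outerDiffPinv, outerDiffProj, Matrix.add_mul, Matrix.sub_mul, Matrix.mul_add,
    Matrix.mul_sub, Matrix.smul_mul, Matrix.mul_smul, vecMulVec_mul_vecMulVec, hoo, hee, hoe,
    dotProduct_comm e o, vecMulVec_smul, one_smul]
  match_scalars <;> field_simp <;> ring

end OuterDiff

theorem isMoorePenrose_outerDiff {ι : Type*} [Fintype ι] {n : ℝ} {o e : ι → ℝ}
    (hoo : o ⬝ᵥ o = n) (hee : e ⬝ᵥ e = 1) (hoe : o ⬝ᵥ e = 1) (hn : n ≠ 1) :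
    IsMoorePenrose (outerDiff o e) (outerDiffPinv n o e) := by
  rw [IsMoorePenrose, outerDiff_mul_outerDiffPinv hoo hee hoe,
    outerDiffPinv_mul_outerDiff hoo hee hoe]
  exact ⟨transpose_outerDiffProj, transpose_outerDiffProj,
    outerDiffProj_mul_outerDiff hoo hee hoe hn, outerDiffProj_mul_outerDiffPinv hoo hee hoe hn⟩

/-- For `K = 𝟏𝟏ᵀ − e₁e₁ᵀ` (all ones except a zero in the `(1,1)` entry), `m ≥ 2`, the
Moore-Penrose inverse is `K† = (1/(m−1))(e₁𝟏ᵀ + 𝟏e₁ᵀ − (m+1)e₁e₁ᵀ)`. -/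
theorem stmt_14 (m : ℕ) (hm : 2 ≤ m)
    (K : Matrix (Fin m) (Fin m) ℝ)
    (hK : ∀ i j, K i j = if (i : ℕ) = 0 ∧ (j : ℕ) = 0 then 0 else 1) :
    IsMoorePenrose K (Matrix.of fun i j =>
      (1 / ((m : ℝ) - 1)) * ((if (i : ℕ) = 0 then (1:ℝ) else 0) + (if (j : ℕ) = 0 then (1:ℝ) else 0)
        - ((m : ℝ) + 1) * (if (i : ℕ) = 0 ∧ (j : ℕ) = 0 then (1:ℝ) else 0))) := by
  set e : Fin m → ℝ := Pi.single ⟨0, by omega⟩ 1 with he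
  have he_apply (i : Fin m) : e i = if (i : ℕ) = 0 then 1 else 0 := by
    simp [he, Pi.single_apply, Fin.ext_iff]
  have hm1 : (m : ℝ) ≠ 1 := by exact_mod_cast (show m ≠ 1 by omega)
  convert isMoorePenrose_outerDiff (o := (1 : Fin m → ℝ)) (e := e) (by simp) (by simp [he]) (by simp [he]) hm1 using 1
    <;> ext i j <;> by_cases hi : (i : ℕ) = 0 <;> by_cases hj : (j : ℕ) = 0 <;>
      simp [hK, outerDiff, outerDiffPinv, vecMulVec_apply, he_apply, hi, hj]
end

section
/- The graph K_{m,m}^{−e}, obtained from the complete bipartite graph K_{m,m} by deleting one edge, is both positively and negatively pseudo-invertible: with adjacency matrix A = [[0, K],[Kᵀ, 0]] where K = 𝟏𝟏ᵀ − e₁e₁ᵀ, the matrix D A† D is entrywise nonnegative for D = diag(D₊, D₋) with D₊ = diag(−1,1,...,1), D₋ = diag(1,−1,...,−1), and D A† D is entrywise nonpositive for D = diag(D₊, −D₋). -/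
/-!
The entries of `K`, `K†` and of every product of them depend only on whether each index is `0`.
Such "corner matrices" form an algebra in which multiplication is that of `2 × 2` matrices, with
the summation index weighted by the sizes `1` and `m - 1` of the two classes; in it the Penrose
identities for `(K, K†)` become scalar identities, and they pass to the bipartite block matrices
`A`, `A†`. Conjugating `A†` by `D` gives off-diagonal blocks with corner values `1, c, c, 0`,
where `c = 1/(m - 1) ≥ 0`; flipping the sign of one side of the bipartition negates `D A† D`.
-/

open Matrix

section Corner

variable {R : Type*} {m : ℕ}

def cornerVector (m : ℕ) (x y : R) : Fin m → R := fun i => if (i : ℕ) = 0 then x else y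

def cornerMatrix (m : ℕ) (a b c d : R) : Matrix (Fin m) (Fin m) R :=
  of fun i j =>
    if (i : ℕ) = 0 then (if (j : ℕ) = 0 then a else b) else (if (j : ℕ) = 0 then c else d)

theorem cornerMatrix_transpose (a b c d : R) :
    (cornerMatrix m a b c d)ᵀ = cornerMatrix m a c b d := by
  ext i j
  simp only [transpose_apply, cornerMatrix, of_apply]
  split_ifs <;> rfl

theorem cornerMatrix_nonneg [LE R] [Zero R] {a b c d : R}
    (ha : 0 ≤ a) (hb : 0 ≤ b) (hc : 0 ≤ c) (hd : 0 ≤ d) (i j : Fin m) :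
    0 ≤ cornerMatrix m a b c d i j := by
  simp only [cornerMatrix, of_apply]
  split_ifs <;> assumption

theorem diagonal_cornerVector_mul_cornerMatrix_mul [Semiring R] (x y a b c d x' y' : R) :
    diagonal (cornerVector m x y) * cornerMatrix m a b c d * diagonal (cornerVector m x' y') =
      cornerMatrix m (x * a * x') (x * b * y') (y * c * x') (y * d * y') := by
  ext i j
  simp only [mul_diagonal, diagonal_mul, cornerVector, cornerMatrix, of_apply]
  split_ifs <;> rfl

theorem cornerMatrix_mul [Ring R] [NeZero m] (a b c d a' b' c' d' : R) :
    cornerMatrix m a b c d * cornerMatrix m a' b' c' d' =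
      cornerMatrix m (a * a' + (m - 1) * (b * c')) (a * b' + (m - 1) * (b * d'))
        (c * a' + (m - 1) * (d * c')) (c * b' + (m - 1) * (d * d')) := by
  obtain ⟨n, rfl⟩ : ∃ n, m = n + 1 := Nat.exists_eq_succ_of_ne_zero (NeZero.ne m)
  ext i j
  simp only [mul_apply, Fin.sum_univ_succ, cornerMatrix, of_apply, Fin.val_zero, Fin.val_succ,
    Nat.add_one_ne_zero, if_true, if_false, Finset.sum_const, Finset.card_univ, Fintype.card_fin,
    nsmul_eq_mul, Nat.cast_add, Nat.cast_one, add_sub_cancel_right]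
  split_ifs <;> rfl

end Corner

section BipartiteBlocks

variable {α β : Type*} [Fintype α] [Fintype β]

theorem IsMoorePenrose.fromBlocks_zero {K : Matrix α β ℝ} {K' : Matrix β α ℝ}
    (h : IsMoorePenrose K K') :
    IsMoorePenrose (fromBlocks 0 K Kᵀ 0) (fromBlocks 0 K'ᵀ K' 0) := by
  obtain ⟨h₁, h₂, h₃, h₄⟩ := h
  have hKt : K' * K * Kᵀ = Kᵀ := by
    calc K' * K * Kᵀ = (K * (K' * K))ᵀ := by rw [transpose_mul, h₂]
      _ = Kᵀ := by rw [← Matrix.mul_assoc, h₃]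
  have hK't : K * K' * K'ᵀ = K'ᵀ := by
    calc K * K' * K'ᵀ = (K' * (K * K'))ᵀ := by rw [transpose_mul, h₁]
      _ = K'ᵀ := by rw [← Matrix.mul_assoc, h₄]
  have hAAd :
      fromBlocks 0 K Kᵀ 0 * fromBlocks 0 K'ᵀ K' 0 = fromBlocks (K * K') 0 0 (K' * K) := by
    simp [fromBlocks_multiply, ← transpose_mul, h₂]
  have hAdA :
      fromBlocks 0 K'ᵀ K' 0 * fromBlocks 0 K Kᵀ 0 = fromBlocks (K * K') 0 0 (K' * K) := by
    simp [fromBlocks_multiply, ← transpose_mul, h₁]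
  refine ⟨?_, ?_, ?_, ?_⟩
  · simp only [hAAd, fromBlocks_transpose, h₁, h₂, transpose_zero]
  · simp only [hAdA, fromBlocks_transpose, h₁, h₂, transpose_zero]
  · simp [hAAd, fromBlocks_multiply, h₃, hKt]
  · simp [hAdA, fromBlocks_multiply, h₄, hK't]

variable {R : Type*} [Ring R] [DecidableEq α] [DecidableEq β]

theorem diagonal_sumElim_mul_fromBlocks_zero_mul (d₁ e₁ : α → R) (d₂ e₂ : β → R)
    (B : Matrix α β R) (C : Matrix β α R) :
    diagonal (Sum.elim d₁ d₂) * fromBlocks 0 B C 0 * diagonal (Sum.elim e₁ e₂) =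
      fromBlocks 0 (diagonal d₁ * B * diagonal e₂) (diagonal d₂ * C * diagonal e₁) 0 := by
  simp only [← fromBlocks_diagonal, fromBlocks_multiply, Matrix.zero_mul, Matrix.mul_zero,
    zero_add, add_zero]

theorem diagonal_sumElim_neg_mul_fromBlocks_zero_mul (d₁ : α → R) (d₂ : β → R)
    (B : Matrix α β R) (C : Matrix β α R) :
    diagonal (Sum.elim d₁ fun i => -d₂ i) * fromBlocks 0 B C 0 *
        diagonal (Sum.elim d₁ fun i => -d₂ i) =
      -(diagonal (Sum.elim d₁ d₂) * fromBlocks 0 B C 0 * diagonal (Sum.elim d₁ d₂)) := by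
  simp only [diagonal_sumElim_mul_fromBlocks_zero_mul, fromBlocks_neg, neg_zero, ← diagonal_neg,
    Matrix.mul_neg, Matrix.neg_mul]

end BipartiteBlocks

theorem isMoorePenrose_cornerMatrix {m : ℕ} (hm : 2 ≤ m) :
    IsMoorePenrose (cornerMatrix m 0 1 1 1 : Matrix (Fin m) (Fin m) ℝ)
      (cornerMatrix m (-1) ((m : ℝ) - 1)⁻¹ ((m : ℝ) - 1)⁻¹ 0) := by
  have : NeZero m := ⟨by omega⟩
  have hm₁ : (m : ℝ) - 1 ≠ 0 := sub_ne_zero.mpr (by exact_mod_cast (by omega : m ≠ 1))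
  refine ⟨?_, ?_, ?_, ?_⟩ <;>
    simp only [cornerMatrix_mul, cornerMatrix_transpose] <;> congr 1 <;> field_simp <;> ring

/-- `K_{m,m}^{−e}` is positively and negatively pseudo-invertible: with
`A = [[0,K],[Kᵀ,0]]`, `A† = [[0,(K†)ᵀ],[K†,0]]`, `D A† D ≥ 0` for
`D = diag(D₊,D₋)`, `D₊ = diag(−1,1,…,1)`, `D₋ = diag(1,−1,…,−1)`, and `D A† D ≤ 0`
for `D = diag(D₊,−D₋)`. -/
theorem stmt_15 (m : ℕ) (hm : 2 ≤ m)
    (K Kd : Matrix (Fin m) (Fin m) ℝ)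
    (hK : ∀ i j, K i j = if (i : ℕ) = 0 ∧ (j : ℕ) = 0 then 0 else 1)
    (hKd : ∀ i j, Kd i j = (1 / ((m : ℝ) - 1)) *
      ((if (i : ℕ) = 0 then (1:ℝ) else 0) + (if (j : ℕ) = 0 then (1:ℝ) else 0)
        - ((m : ℝ) + 1) * (if (i : ℕ) = 0 ∧ (j : ℕ) = 0 then (1:ℝ) else 0)))
    (A Ad : Matrix (Fin m ⊕ Fin m) (Fin m ⊕ Fin m) ℝ)
    (hA : A = Matrix.fromBlocks 0 K Kᵀ 0)
    (hAd : Ad = Matrix.fromBlocks 0 Kdᵀ Kd 0) :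
    IsMoorePenrose A Ad ∧
    (∀ i j, 0 ≤ (Matrix.diagonal
        (Sum.elim (fun i : Fin m => if (i : ℕ) = 0 then (-1:ℝ) else 1)
                  (fun i : Fin m => if (i : ℕ) = 0 then (1:ℝ) else -1)) * Ad *
      Matrix.diagonal
        (Sum.elim (fun i : Fin m => if (i : ℕ) = 0 then (-1:ℝ) else 1)
                  (fun i : Fin m => if (i : ℕ) = 0 then (1:ℝ) else -1))) i j) ∧
    (∀ i j, (Matrix.diagonal
        (Sum.elim (fun i : Fin m => if (i : ℕ) = 0 then (-1:ℝ) else 1)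
                  (fun i : Fin m => -(if (i : ℕ) = 0 then (1:ℝ) else -1))) * Ad *
      Matrix.diagonal
        (Sum.elim (fun i : Fin m => if (i : ℕ) = 0 then (-1:ℝ) else 1)
                  (fun i : Fin m => -(if (i : ℕ) = 0 then (1:ℝ) else -1)))) i j ≤ 0) := by
  have hm₁ : (1 : ℝ) < m := by exact_mod_cast hm
  set c : ℝ := ((m : ℝ) - 1)⁻¹
  have hc : 0 ≤ c := inv_nonneg.mpr (sub_nonneg.mpr hm₁.le)
  have hK' : K = cornerMatrix m 0 1 1 1 := by
    ext i j
    by_cases hi : (i : ℕ) = 0 <;> by_cases hj : (j : ℕ) = 0 <;> simp [hK, cornerMatrix, hi, hj]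
  have hKd' : Kd = cornerMatrix m (-1) c c 0 := by
    ext i j
    by_cases hi : (i : ℕ) = 0 <;> by_cases hj : (j : ℕ) = 0 <;>
      simp [hKd, cornerMatrix, c, hi, hj]
    field_simp [sub_ne_zero.mpr hm₁.ne']
    ring
  have hDAdD : diagonal (Sum.elim (cornerVector m (-1) 1) (cornerVector m 1 (-1))) * Ad *
      diagonal (Sum.elim (cornerVector m (-1) 1) (cornerVector m 1 (-1))) =
      fromBlocks 0 (cornerMatrix m 1 c c 0) (cornerMatrix m 1 c c 0) 0 := by
    rw [hAd, hKd', cornerMatrix_transpose, diagonal_sumElim_mul_fromBlocks_zero_mul,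
      diagonal_cornerVector_mul_cornerMatrix_mul, diagonal_cornerVector_mul_cornerMatrix_mul]
    congr 2 <;> ring
  have hnonneg :
      ∀ i j, 0 ≤ fromBlocks 0 (cornerMatrix m 1 c c 0) (cornerMatrix m 1 c c 0) 0 i j := by
    rintro (i | i) (j | j) <;> simp [cornerMatrix_nonneg, hc]
  refine ⟨?_, hDAdD ▸ hnonneg, fun i j => ?_⟩
  · rw [hA, hAd, hK', hKd']
    exact (isMoorePenrose_cornerMatrix hm).fromBlocks_zero
  · rw [hAd, diagonal_sumElim_neg_mul_fromBlocks_zero_mul, ← hAd]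
    exact neg_nonpos.mpr (hDAdD ▸ hnonneg i j)
end

section
/- Let G be a simple connected graph on k labeled vertices with adjacency matrix 𝒜, and let m₁,...,m_k ≥ 1. The G-complete multipartitioned graph G_{m₁,...,m_k} of order m = m₁+...+m_k (each vertex i blown up to an independent set of m_i vertices, with complete joins along edges of G) has spectrum consisting of the eigenvalue 0 with multiplicity m − k together with all eigenvalues of the k×k matrix M^{1/2} 𝒜 M^{1/2}, where M = diag(m₁,...,m_k). -/
open Matrix

/-!
Let `f : κ → ι` send each vertex of the blow-up to the vertex of `G` it comes from, and let
`P = (1 : Matrix ι ι R).submatrix f id` be its incidence matrix. The blow-up of `𝒜` is `P 𝒜 Pᵀ`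
and `Pᵀ P = M` is the diagonal matrix of fibre sizes. As `AB` and `BA` have the same
characteristic polynomial up to a power of `X`, the blow-up has that of `𝒜 Pᵀ P = 𝒜 M` times
`X ^ (m - k)`, and `M^{1/2} 𝒜 M^{1/2}` has that of `𝒜 M^{1/2} M^{1/2} = 𝒜 M`.
-/

namespace Matrix

open Polynomial Finset

variable {ι κ R : Type*} [DecidableEq ι] [CommRing R]

theorem submatrix_eq_one_submatrix_mul_mul [Fintype ι] (f : κ → ι) (B : Matrix ι ι R) :
    B.submatrix f f =
      (1 : Matrix ι ι R).submatrix f id * B * (1 : Matrix ι ι R).submatrix id f := by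
  have hl := one_submatrix_mul f (Equiv.refl ι) B
  have hr := mul_submatrix_one (Equiv.refl ι) f (B.submatrix f id)
  simp only [Equiv.coe_refl, Equiv.refl_symm, Function.id_comp] at hl hr
  rw [hl, hr, submatrix_submatrix, Function.id_comp, Function.comp_id]

theorem one_submatrix_id_mul_one_submatrix [Fintype κ] (f : κ → ι) :
    (1 : Matrix ι ι R).submatrix id f * (1 : Matrix ι ι R).submatrix f id =
      diagonal fun i => (#{p | f p = i} : R) := by
  ext i j
  simp only [mul_apply, submatrix_apply, id_eq, one_apply, diagonal_apply, eq_comm (a := i)]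
  by_cases hij : i = j
  · subst hij
    simp +contextual [Finset.sum_boole]
  · simp +contextual [Ne.symm hij]

theorem charpoly_submatrix [Fintype ι] [Fintype κ] [DecidableEq κ] (f : κ → ι)
    (hf : Function.Surjective f) (B : Matrix ι ι R) :
    (B.submatrix f f).charpoly = X ^ (Fintype.card κ - Fintype.card ι) *
      (B * diagonal fun i => (#{p | f p = i} : R)).charpoly := by
  rw [submatrix_eq_one_submatrix_mul_mul, Matrix.mul_assoc,
    charpoly_mul_comm_of_le _ _ (Fintype.card_le_of_surjective f hf), Matrix.mul_assoc,
    one_submatrix_id_mul_one_submatrix]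

theorem charpoly_diagonal_mul_mul_diagonal [Fintype ι] (B : Matrix ι ι R) {d c : ι → R}
    (hdc : ∀ i, d i * d i = c i) :
    (diagonal d * B * diagonal d).charpoly = (B * diagonal c).charpoly := by
  rw [Matrix.mul_assoc, charpoly_mul_comm, Matrix.mul_assoc, diagonal_mul_diagonal]
  simp only [hdc]

end Matrix

theorem stmt_16_general (k : ℕ) (G : SimpleGraph (Fin k)) [DecidableRel G.Adj]
    (m : Fin k → ℕ) (hm : ∀ i, 1 ≤ m i)
    (A : Matrix (Σ i : Fin k, Fin (m i)) (Σ i : Fin k, Fin (m i)) ℝ)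
    (hA : ∀ p q, A p q = G.adjMatrix ℝ p.1 q.1) :
    A.charpoly = Polynomial.X ^ ((∑ i, m i) - k) *
      (Matrix.diagonal (fun i => Real.sqrt (m i)) * G.adjMatrix ℝ *
        Matrix.diagonal (fun i => Real.sqrt (m i))).charpoly := by
  have hA' : A = (G.adjMatrix ℝ).submatrix Sigma.fst Sigma.fst := Matrix.ext hA
  have hsurj : Function.Surjective (Sigma.fst : (Σ i : Fin k, Fin (m i)) → Fin k) :=
    fun i => ⟨⟨i, ⟨0, hm i⟩⟩, rfl⟩
  have hfibre (i : Fin k) :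
      (Finset.univ.filter fun p : Σ i : Fin k, Fin (m i) => p.1 = i).card = m i := by
    rw [Finset.card_filter, Fintype.sum_sigma, Finset.sum_eq_single i]
    · simp
    all_goals simp +contextual
  rw [hA', Matrix.charpoly_submatrix _ hsurj, Matrix.charpoly_diagonal_mul_mul_diagonal _
    fun i => Real.mul_self_sqrt (Nat.cast_nonneg (m i))]
  simp only [hfibre, Fintype.card_sigma, Fintype.card_fin]

/-- The `G`-complete multipartitioned graph `G_{m₁,…,m_k}` (each vertex `i` of `G` blown up into
an independent set of `m i` vertices) has spectrum consisting of `0` with multiplicity `m − k`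
together with the eigenvalues of `M^{1/2} 𝒜 M^{1/2}`, `M = diag(m₁,…,m_k)`; equivalently its
characteristic polynomial is `X^(m−k)` times that of `M^{1/2} 𝒜 M^{1/2}`. -/
theorem stmt_16 (k : ℕ) (G : SimpleGraph (Fin k)) [DecidableRel G.Adj]
    (hconn : G.Connected) (m : Fin k → ℕ) (hm : ∀ i, 1 ≤ m i)
    (A : Matrix (Σ i : Fin k, Fin (m i)) (Σ i : Fin k, Fin (m i)) ℝ)
    (hA : ∀ p q, A p q = G.adjMatrix ℝ p.1 q.1) :
    A.charpoly = Polynomial.X ^ ((∑ i, m i) - k) *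
      (Matrix.diagonal (fun i => Real.sqrt (m i)) * G.adjMatrix ℝ *
        Matrix.diagonal (fun i => Real.sqrt (m i))).charpoly :=
  stmt_16_general k G m hm A hA
end

section
/- With A = (𝒜_{ij} E_{m_i,m_j}) the adjacency matrix of the G-complete multipartitioned graph G_{m₁,...,m_k} and M = diag(m₁,...,m_k), the Moore-Penrose inverse of A is A† = (β_{ij} E_{m_i,m_j}), where the k×k matrix B = (β_{ij}) equals M^{−1/2} (M^{1/2} 𝒜 M^{1/2})† M^{−1/2}. -/
/-!
Blowing up `k × k` matrices to block matrices `(X_{ij} E_{m_i,m_j})` turns products into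
`X * M * Y` with `M = diag(m)`. Conjugating by `M^{-1/2}` first therefore gives a multiplicative
map commuting with transposition, and such a map sends a Moore-Penrose pair to a Moore-Penrose
pair. It sends `M^{1/2} 𝒜 M^{1/2}` to `A` and its Moore-Penrose inverse to the blowup of `B`.
-/

open Matrix

theorem IsMoorePenrose.map {ι κ : Type*} [Fintype ι] [Fintype κ]
    (f : Matrix ι ι ℝ →ₙ* Matrix κ κ ℝ) (hf : ∀ X, f Xᵀ = (f X)ᵀ)
    {K S : Matrix ι ι ℝ} (h : IsMoorePenrose K S) : IsMoorePenrose (f K) (f S) := by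
  obtain ⟨h₁, h₂, h₃, h₄⟩ := h
  refine ⟨?_, ?_, ?_, ?_⟩ <;> simp only [← map_mul, ← hf, h₁, h₂, h₃, h₄]

namespace Matrix

variable {ι : Type*} [Fintype ι] [DecidableEq ι] {β : ι → Type*} [∀ i, Fintype (β i)]
  {R : Type*}

theorem submatrix_sigmaFst_mul_submatrix_sigmaFst [Semiring R] {α γ α' γ' : Type*}
    (X : Matrix α ι R) (Y : Matrix ι γ R) (f : α' → α) (g : γ' → γ) :
    X.submatrix f (Sigma.fst (β := β)) * Y.submatrix (Sigma.fst (β := β)) g =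
      (X * diagonal (fun i => (Fintype.card (β i) : R)) * Y).submatrix f g := by
  ext p q
  simp only [mul_apply, submatrix_apply, Fintype.sum_sigma, diagonal_apply, mul_ite, mul_zero,
    Finset.sum_ite_eq', Finset.mem_univ, if_true, Finset.sum_const, Finset.card_univ, nsmul_eq_mul,
    mul_assoc, Nat.cast_comm]

def weightedBlowup [CommSemiring R] (w : ι → R)
    (hw : ∀ i, w i * Fintype.card (β i) * w i = 1) :
    Matrix ι ι R →ₙ* Matrix (Σ i, β i) (Σ i, β i) R where
  toFun X := (diagonal w * X * diagonal w).submatrix Sigma.fst Sigma.fst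
  map_mul' X Y := by
    have hcancel :
        diagonal w * diagonal (fun i => (Fintype.card (β i) : R)) * diagonal w = 1 := by
      simp only [diagonal_mul_diagonal, hw, diagonal_one]
    rw [submatrix_sigmaFst_mul_submatrix_sigmaFst]
    congr 1
    calc diagonal w * (X * Y) * diagonal w = diagonal w * X * 1 * Y * diagonal w := by
          simp only [Matrix.mul_one, Matrix.mul_assoc]
      _ = _ := by rw [← hcancel]; simp only [Matrix.mul_assoc]

theorem weightedBlowup_transpose [CommSemiring R] (w : ι → R)
    (hw : ∀ i, w i * Fintype.card (β i) * w i = 1) (X : Matrix ι ι R) :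
    weightedBlowup w hw Xᵀ = (weightedBlowup w hw X)ᵀ := by
  simp only [weightedBlowup, MulHom.coe_mk, transpose_submatrix, transpose_mul,
    diagonal_transpose, Matrix.mul_assoc]

end Matrix

theorem stmt_17_general (k : ℕ) (G : SimpleGraph (Fin k)) [DecidableRel G.Adj]
    (m : Fin k → ℕ) (hm : ∀ i, 1 ≤ m i)
    (S : Matrix (Fin k) (Fin k) ℝ)
    (hS : IsMoorePenrose
      (Matrix.diagonal (fun i => Real.sqrt (m i)) * G.adjMatrix ℝ *
        Matrix.diagonal (fun i => Real.sqrt (m i))) S)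
    (A Ad : Matrix (Σ i : Fin k, Fin (m i)) (Σ i : Fin k, Fin (m i)) ℝ)
    (hA : ∀ p q, A p q = G.adjMatrix ℝ p.1 q.1)
    (hAd : ∀ p q, Ad p q =
      (Matrix.diagonal (fun i => (Real.sqrt (m i))⁻¹) * S *
        Matrix.diagonal (fun i => (Real.sqrt (m i))⁻¹)) p.1 q.1) :
    IsMoorePenrose A Ad := by
  set d : Fin k → ℝ := fun i => Real.sqrt (m i)
  have hm_pos : ∀ i, (0 : ℝ) < m i := fun i => by exact_mod_cast hm i
  have hd : ∀ i, d i ≠ 0 := fun i => (Real.sqrt_pos.mpr (hm_pos i)).ne'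
  have hw : ∀ i, (d i)⁻¹ * Fintype.card (Fin (m i)) * (d i)⁻¹ = 1 := fun i => by
    rw [Fintype.card_fin]
    field_simp
    rw [Real.sq_sqrt (hm_pos i).le, div_self (hm_pos i).ne']
  have hinv_mul : diagonal (fun i => (d i)⁻¹) * diagonal d = 1 := by
    simp only [diagonal_mul_diagonal, inv_mul_cancel₀ (hd _), diagonal_one]
  have hmul_inv : diagonal d * diagonal (fun i => (d i)⁻¹) = 1 := by
    simp only [diagonal_mul_diagonal, mul_inv_cancel₀ (hd _), diagonal_one]
  let Φ := weightedBlowup (β := fun i => Fin (m i)) _ hw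
  have hA_eq : A = Φ (diagonal d * G.adjMatrix ℝ * diagonal d) := by
    ext p q
    simp only [Φ, weightedBlowup, MulHom.coe_mk, submatrix_apply, hA, ← Matrix.mul_assoc,
      hinv_mul, Matrix.one_mul]
    simp only [Matrix.mul_assoc, hmul_inv, Matrix.mul_one]
  have hAd_eq : Ad = Φ S := by ext p q; exact hAd p q
  rw [hA_eq, hAd_eq]
  exact hS.map Φ (weightedBlowup_transpose _ hw)

/-- The Moore-Penrose inverse of the adjacency matrix `A = (𝒜_{ij} E_{m_i,m_j})` of the
`G`-complete multipartitioned graph is `A† = (β_{ij} E_{m_i,m_j})` where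
`B = (β_{ij}) = M^{−1/2} (M^{1/2} 𝒜 M^{1/2})† M^{−1/2}`. -/
theorem stmt_17 (k : ℕ) (G : SimpleGraph (Fin k)) [DecidableRel G.Adj]
    (hconn : G.Connected) (m : Fin k → ℕ) (hm : ∀ i, 1 ≤ m i)
    (S : Matrix (Fin k) (Fin k) ℝ)
    (hS : IsMoorePenrose
      (Matrix.diagonal (fun i => Real.sqrt (m i)) * G.adjMatrix ℝ *
        Matrix.diagonal (fun i => Real.sqrt (m i))) S)
    (A Ad : Matrix (Σ i : Fin k, Fin (m i)) (Σ i : Fin k, Fin (m i)) ℝ)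
    (hA : ∀ p q, A p q = G.adjMatrix ℝ p.1 q.1)
    (hAd : ∀ p q, Ad p q =
      (Matrix.diagonal (fun i => (Real.sqrt (m i))⁻¹) * S *
        Matrix.diagonal (fun i => (Real.sqrt (m i))⁻¹)) p.1 q.1) :
    IsMoorePenrose A Ad :=
  stmt_17_general k G m hm S hS A Ad hA hAd
end

section
/- Let G^B be a simple connected graph of order k with adjacency matrix B, and let G^A be the corona graph of order m = 2k obtained by attaching a pendant vertex to each vertex of G^B, so A = [[0, I],[I, B]] in block form. Then A is integrally invertible with A⁻¹ = [[−B, I],[I, 0]], and A⁻¹ is negatively signable by D = diag(I, −I). Moreover, if G^B is bipartite with a signature matrix D₋ such that D₋ B D₋ ≤ 0, then D = diag(D₋, D₋) signs A⁻¹ to a nonnegative matrix, so G^A is also positively integrally invertible. -/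
/-!
`A = [[0,I],[I,B]]` is the unitriangular matrix `[[I,B],[0,I]]` with its two row blocks swapped,
so `det A` is the sign of that swap, and block multiplication shows that `[[-B,I],[I,0]]` is its
inverse. Conjugation by a block-diagonal sign matrix acts block by block: `diag(I,-I)` turns
`A⁻¹` into `-[[B,I],[I,0]]`, and `diag(D₋,D₋)` turns it into `[[-D₋BD₋,I],[I,0]]` because
`D₋² = I`.
-/

open Matrix

namespace Matrix

variable {l m R : Type*} [DecidableEq l] [DecidableEq m]

theorem diagonal_sumElim_mul_fromBlocks_mul_diagonal_sumElim [Fintype l] [Fintype m]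
    [Semiring R] (d₁ e₁ : l → R) (d₂ e₂ : m → R) (A : Matrix l l R) (B : Matrix l m R)
    (C : Matrix m l R) (D : Matrix m m R) :
    diagonal (Sum.elim d₁ d₂) * fromBlocks A B C D * diagonal (Sum.elim e₁ e₂) =
      fromBlocks (diagonal d₁ * A * diagonal e₁) (diagonal d₁ * B * diagonal e₂)
        (diagonal d₂ * C * diagonal e₁) (diagonal d₂ * D * diagonal e₂) := by
  rw [← fromBlocks_diagonal, ← fromBlocks_diagonal, fromBlocks_multiply, fromBlocks_multiply]
  simp only [Matrix.mul_zero, Matrix.zero_mul, add_zero, zero_add]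

theorem fromBlocks_one_one_zero_apply_nonneg [Semiring R] [PartialOrder R] [IsOrderedRing R]
    {X : Matrix l l R} (hX : ∀ i j, 0 ≤ X i j) :
    ∀ i j, 0 ≤ fromBlocks X 1 1 (0 : Matrix l l R) i j := by
  rintro (i | i) (j | j) <;> simp [hX, one_apply, apply_ite]

section CommRing

variable [CommRing R] (B : Matrix l l R)

theorem fromBlocks_zero_one_one_eq_submatrix :
    fromBlocks 0 1 1 B =
      (fromBlocks 1 B (0 : Matrix l l R) 1).submatrix (Equiv.sumComm l l) id := by
  ext (i | i) (j | j) <;> simp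

variable [Fintype l]

theorem det_fromBlocks_zero_one_one :
    (fromBlocks (0 : Matrix l l R) 1 1 B).det = Equiv.Perm.sign (Equiv.sumComm l l) := by
  rw [fromBlocks_zero_one_one_eq_submatrix, det_permute, det_fromBlocks_zero₂₁]
  simp

theorem det_fromBlocks_zero_one_one_eq_one_or :
    (fromBlocks (0 : Matrix l l R) 1 1 B).det = 1 ∨
      (fromBlocks (0 : Matrix l l R) 1 1 B).det = -1 := by
  rw [det_fromBlocks_zero_one_one]
  rcases Int.units_eq_one_or (Equiv.Perm.sign (Equiv.sumComm l l)) with h | h <;> simp [h]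

theorem inv_fromBlocks_zero_one_one :
    (fromBlocks (0 : Matrix l l R) 1 1 B)⁻¹ = fromBlocks (-B) 1 1 0 :=
  inv_eq_right_inv (by simp [fromBlocks_multiply, ← fromBlocks_one])

end CommRing

end Matrix

theorem stmt_18_general (k : ℕ) (G : SimpleGraph (Fin k)) [DecidableRel G.Adj]
    (A : Matrix (Fin k ⊕ Fin k) (Fin k ⊕ Fin k) ℝ)
    (hA : A = Matrix.fromBlocks 0 1 1 (G.adjMatrix ℝ)) :
    (A.det = 1 ∨ A.det = -1) ∧
    A⁻¹ = Matrix.fromBlocks (-(G.adjMatrix ℝ)) 1 1 0 ∧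
    (∀ i j, (Matrix.diagonal (Sum.elim (fun _ : Fin k => (1:ℝ)) (fun _ : Fin k => (-1:ℝ))) *
        A⁻¹ *
      Matrix.diagonal (Sum.elim (fun _ : Fin k => (1:ℝ)) (fun _ : Fin k => (-1:ℝ)))) i j ≤ 0) ∧
    (∀ dm : Fin k → ℝ, IsSign dm →
      (∀ i j, (Matrix.diagonal dm * G.adjMatrix ℝ * Matrix.diagonal dm) i j ≤ 0) →
      ∀ i j, 0 ≤ (Matrix.diagonal (Sum.elim dm dm) * A⁻¹ *
        Matrix.diagonal (Sum.elim dm dm)) i j) := by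
  subst hA
  refine ⟨det_fromBlocks_zero_one_one_eq_one_or _, inv_fromBlocks_zero_one_one _, ?_, ?_⟩
  · have hB : ∀ i j, 0 ≤ G.adjMatrix ℝ i j := fun i j => by
      rw [SimpleGraph.adjMatrix_apply]; split_ifs <;> norm_num
    have hneg_one : diagonal (fun _ : Fin k => (-1 : ℝ)) = -1 := by
      rw [← diagonal_one, ← diagonal_neg]
    rw [inv_fromBlocks_zero_one_one, diagonal_sumElim_mul_fromBlocks_mul_diagonal_sumElim,
      diagonal_one, hneg_one]
    simp only [Matrix.one_mul, Matrix.mul_one, Matrix.mul_neg, Matrix.mul_zero]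
    rw [← fromBlocks_neg]
    exact fun i j => neg_nonpos.mpr (fromBlocks_one_one_zero_apply_nonneg hB i j)
  · intro dm hdm hneg
    rw [inv_fromBlocks_zero_one_one, diagonal_sumElim_mul_fromBlocks_mul_diagonal_sumElim,
      Matrix.mul_one, Matrix.mul_zero, Matrix.zero_mul, hdm.diagonal_mul_self, Matrix.mul_neg,
      Matrix.neg_mul]
    exact fromBlocks_one_one_zero_apply_nonneg fun i j => neg_nonneg.mpr (hneg i j)

/-- For the corona graph of a simple connected graph `G^B` (a pendant vertex attached to each
vertex), with adjacency matrix `A = [[0,I],[I,B]]`: `A` is integrally invertible with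
`A⁻¹ = [[−B,I],[I,0]]`, negatively signable by `D = diag(I,−I)`; and if `B` is signable to a
nonpositive matrix by `D₋` (e.g. `G^B` bipartite), then `D = diag(D₋,D₋)` signs `A⁻¹` to a
nonnegative matrix, so the corona graph is also positively integrally invertible. -/
theorem stmt_18 (k : ℕ) (G : SimpleGraph (Fin k)) [DecidableRel G.Adj]
    (hconn : G.Connected)
    (A : Matrix (Fin k ⊕ Fin k) (Fin k ⊕ Fin k) ℝ)
    (hA : A = Matrix.fromBlocks 0 1 1 (G.adjMatrix ℝ)) :
    (A.det = 1 ∨ A.det = -1) ∧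
    A⁻¹ = Matrix.fromBlocks (-(G.adjMatrix ℝ)) 1 1 0 ∧
    (∀ i j, (Matrix.diagonal (Sum.elim (fun _ : Fin k => (1:ℝ)) (fun _ : Fin k => (-1:ℝ))) *
        A⁻¹ *
      Matrix.diagonal (Sum.elim (fun _ : Fin k => (1:ℝ)) (fun _ : Fin k => (-1:ℝ)))) i j ≤ 0) ∧
    (∀ dm : Fin k → ℝ, IsSign dm →
      (∀ i j, (Matrix.diagonal dm * G.adjMatrix ℝ * Matrix.diagonal dm) i j ≤ 0) →
      ∀ i j, 0 ≤ (Matrix.diagonal (Sum.elim dm dm) * A⁻¹ *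
        Matrix.diagonal (Sum.elim dm dm)) i j) :=
  stmt_18_general k G A hA
end

section
/- Let A = [[0, I],[I, B]] be the adjacency matrix of the corona graph of a graph G^B with k×k adjacency matrix B. Then λ is an eigenvalue of A if and only if λ = (μ ± √(μ² + 4))/2 for some eigenvalue μ of B, and consequently the spectral power satisfies Λ^pow(A) = Σ_{μ ∈ σ(B)} √(μ² + 4) ≥ max{Λ^pow(B), 2k}, where Λ^pow of a symmetric matrix is the sum of absolute values of its eigenvalues (counted with multiplicity). -/
open Matrix

/-!
Eliminating the first block by its Schur complement gives `det (x - A) = x ^ k * χ_B (x - 1/x)`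
for `x ≠ 0`, so `χ_A = ∏ (X ^ 2 - μ X - 1)` over the eigenvalues `μ` of `B`. The roots of
`X ^ 2 - μ X - 1` are `(μ ± √(μ ^ 2 + 4)) / 2`, one positive and one negative, so their absolute
values add up to their difference `√(μ ^ 2 + 4) ≥ max |μ| 2`.
-/

open Polynomial

section Corona

variable {K : Type*} [Field K] {n : Type*} [Fintype n] [DecidableEq n]

theorem det_scalar_sub_corona (B : Matrix n n K) {x : K} (hx : x ≠ 0) :
    (scalar (n ⊕ n) x - fromBlocks 0 1 1 B).det
      = x ^ Fintype.card n * B.charpoly.eval (x - x⁻¹) := by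
  have := invertibleOfNonzero hx
  have := this.map (scalar n)
  have hblocks : scalar (n ⊕ n) x - fromBlocks 0 1 1 B
      = fromBlocks (scalar n x) (-1) (-1) (scalar n x - B) := by
    ext (i | i) (j | j) <;> simp [one_apply, diagonal_apply, sub_eq_add_neg]
  have hschur : scalar n x - B - -1 * ⅟(scalar n x) * -1 = scalar n (x - x⁻¹) - B := by
    rw [← map_invOf, invOf_eq_inv, map_sub, neg_one_mul, neg_mul_neg, Matrix.mul_one]
    abel
  rw [hblocks, det_fromBlocks₁₁, hschur, eval_charpoly, scalar_apply, det_diagonal,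
    Finset.prod_const, Finset.card_univ]

theorem charpoly_corona_of_charpoly_eq_prod [Infinite K] {B : Matrix n n K} {μ : n → K}
    (hB : B.charpoly = ∏ i, (X - C (μ i))) :
    (fromBlocks (0 : Matrix n n K) 1 1 B).charpoly = ∏ i, (X ^ 2 - C (μ i) * X - 1) := by
  refine eq_of_infinite_eval_eq _ _ ((Set.finite_singleton 0).infinite_compl.mono fun x hx => ?_)
  have hx : x ≠ 0 := hx
  rw [Set.mem_ofPred_eq, eval_charpoly, det_scalar_sub_corona B hx, hB,
    eval_prod, eval_prod, ← Finset.card_univ, ← Finset.prod_const, ← Finset.prod_mul_distrib]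
  refine Finset.prod_congr rfl fun i _ => ?_
  simp only [eval_sub, eval_X, eval_C, eval_mul, eval_pow, eval_one]
  field_simp
  ring

end Corona

theorem Polynomial.roots_univ_prod_X_sub_C {R ι : Type*} [CommRing R] [IsDomain R] [Fintype ι]
    (a : ι → R) : (∏ i, (X - C (a i))).roots = Finset.univ.val.map a := by
  rw [roots_prod _ _ (Finset.prod_ne_zero_iff.mpr fun i _ => X_sub_C_ne_zero (a i))]
  simp only [roots_X_sub_C, Multiset.bind_singleton]

noncomputable def coronaRootPos (m : ℝ) : ℝ := (m + √(m ^ 2 + 4)) / 2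

noncomputable def coronaRootNeg (m : ℝ) : ℝ := (m - √(m ^ 2 + 4)) / 2

theorem X_sq_sub_C_mul_X_sub_one_eq (m : ℝ) :
    (X ^ 2 - C m * X - 1 : ℝ[X]) = (X - C (coronaRootPos m)) * (X - C (coronaRootNeg m)) := by
  have hsq : √(m ^ 2 + 4) ^ 2 = m ^ 2 + 4 := Real.sq_sqrt (by positivity)
  have hsum : coronaRootPos m + coronaRootNeg m = m := by
    rw [coronaRootPos, coronaRootNeg]; ring
  have hprod : coronaRootPos m * coronaRootNeg m = -1 := by
    rw [coronaRootPos, coronaRootNeg]; linear_combination -hsq / 4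
  calc (X ^ 2 - C m * X - 1 : ℝ[X])
      = X ^ 2 - C (coronaRootPos m + coronaRootNeg m) * X
          + C (coronaRootPos m * coronaRootNeg m) := by rw [hsum, hprod, C_neg, C_1]; ring
    _ = (X - C (coronaRootPos m)) * (X - C (coronaRootNeg m)) := by rw [C_add, C_mul]; ring

theorem abs_le_sqrt_sq_add_four (m : ℝ) : |m| ≤ √(m ^ 2 + 4) := by
  rw [← Real.sqrt_sq_eq_abs]
  exact Real.sqrt_le_sqrt (by linarith)

theorem two_le_sqrt_sq_add_four (m : ℝ) : 2 ≤ √(m ^ 2 + 4) :=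
  Real.le_sqrt_of_sq_le (by nlinarith)

theorem abs_coronaRootPos_add_abs_coronaRootNeg (m : ℝ) :
    |coronaRootPos m| + |coronaRootNeg m| = √(m ^ 2 + 4) := by
  obtain ⟨hl, hr⟩ := abs_le.mp (abs_le_sqrt_sq_add_four m)
  rw [coronaRootPos, coronaRootNeg, abs_of_nonneg (by linarith), abs_of_nonpos (by linarith)]
  ring

namespace Matrix.IsHermitian

variable {n : Type*} [Fintype n] [DecidableEq n] {B : Matrix n n ℝ}

theorem charpoly_corona_eq_prod (hB : B.IsHermitian) :
    (Matrix.fromBlocks (0 : Matrix n n ℝ) 1 1 B).charpoly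
      = ∏ i, (X - C (coronaRootPos (hB.eigenvalues i)))
          * (X - C (coronaRootNeg (hB.eigenvalues i))) := by
  simp only [charpoly_corona_of_charpoly_eq_prod hB.charpoly_eq, X_sq_sub_C_mul_X_sub_one_eq]
  rfl

theorem eigenvalues_corona (hB : B.IsHermitian)
    (hA : (Matrix.fromBlocks (0 : Matrix n n ℝ) 1 1 B).IsHermitian) :
    Finset.univ.val.map hA.eigenvalues
      = Finset.univ.val.map (coronaRootPos ∘ hB.eigenvalues)
        + Finset.univ.val.map (coronaRootNeg ∘ hB.eigenvalues) := by
  have := hA.roots_charpoly_eq_eigenvalues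
  rw [hB.charpoly_corona_eq_prod, Finset.prod_mul_distrib, roots_mul, roots_univ_prod_X_sub_C,
    roots_univ_prod_X_sub_C] at this
  · simpa using this.symm
  · exact mul_ne_zero (monic_prod_of_monic _ _ fun i _ => monic_X_sub_C _).ne_zero
      (monic_prod_of_monic _ _ fun i _ => monic_X_sub_C _).ne_zero

theorem mem_spectrum_corona_iff (hB : B.IsHermitian)
    (hA : (Matrix.fromBlocks (0 : Matrix n n ℝ) 1 1 B).IsHermitian) (x : ℝ) :
    x ∈ spectrum ℝ (Matrix.fromBlocks (0 : Matrix n n ℝ) 1 1 B)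
      ↔ ∃ i, x = coronaRootPos (hB.eigenvalues i) ∨ x = coronaRootNeg (hB.eigenvalues i) := by
  have h := congr(x ∈ $(hB.eigenvalues_corona hA))
  simp only [Multiset.mem_add, Multiset.mem_map, Finset.mem_val, Finset.mem_univ, true_and,
    Function.comp_apply] at h
  rw [hA.spectrum_real_eq_range_eigenvalues, Set.mem_range, h, ← exists_or]
  simp only [eq_comm]

theorem sum_abs_eigenvalues_corona (hB : B.IsHermitian)
    (hA : (Matrix.fromBlocks (0 : Matrix n n ℝ) 1 1 B).IsHermitian) :
    ∑ i, |hA.eigenvalues i| = ∑ i, √(hB.eigenvalues i ^ 2 + 4) := by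
  calc ∑ i, |hA.eigenvalues i| = ((Finset.univ.val.map hA.eigenvalues).map abs).sum := by
        rw [Multiset.map_map]; rfl
    _ = ∑ i, (|coronaRootPos (hB.eigenvalues i)| + |coronaRootNeg (hB.eigenvalues i)|) := by
        rw [hB.eigenvalues_corona hA, Multiset.map_add, Multiset.sum_add, Finset.sum_add_distrib,
          Multiset.map_map, Multiset.map_map]
        rfl
    _ = ∑ i, √(hB.eigenvalues i ^ 2 + 4) := by simp only [abs_coronaRootPos_add_abs_coronaRootNeg]

end Matrix.IsHermitian

/-- For the corona matrix `A = [[0,I],[I,B]]` of a symmetric `B`: `λ` is an eigenvalue of `A`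
iff `λ = (μ ± √(μ²+4))/2` for some eigenvalue `μ` of `B`, and the spectral power satisfies
`Λ^pow(A) = Σ_{μ∈σ(B)} √(μ²+4) ≥ max{Λ^pow(B), 2k}`. -/
theorem stmt_19 (k : ℕ) (B : Matrix (Fin k) (Fin k) ℝ) (hB : B.IsHermitian)
    (hA : (Matrix.fromBlocks (0 : Matrix (Fin k) (Fin k) ℝ) 1 1 B).IsHermitian) :
    (∀ lam : ℝ, lam ∈ spectrum ℝ (Matrix.fromBlocks (0 : Matrix (Fin k) (Fin k) ℝ) 1 1 B) ↔
      ∃ mu ∈ spectrum ℝ B, lam = (mu + Real.sqrt (mu ^ 2 + 4)) / 2 ∨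
        lam = (mu - Real.sqrt (mu ^ 2 + 4)) / 2) ∧
    (∑ i, |hA.eigenvalues i|) = (∑ j, Real.sqrt ((hB.eigenvalues j) ^ 2 + 4)) ∧
    max (∑ j, |hB.eigenvalues j|) ((2 * k : ℕ) : ℝ) ≤ ∑ i, |hA.eigenvalues i| := by
  have hsum := hB.sum_abs_eigenvalues_corona hA
  refine ⟨fun lam => ?_, hsum, ?_⟩
  · rw [hB.mem_spectrum_corona_iff hA, hB.spectrum_real_eq_range_eigenvalues,
      Set.exists_range_iff]
    rfl
  · rw [hsum, max_le_iff]
    refine ⟨Finset.sum_le_sum fun j _ => abs_le_sqrt_sq_add_four _, ?_⟩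
    calc ((2 * k : ℕ) : ℝ) = ∑ _j : Fin k, (2 : ℝ) := by simp [mul_comm]
      _ ≤ _ := Finset.sum_le_sum fun j _ => two_le_sqrt_sq_add_four _
end
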